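/- Let v, w be C³ functions of (x,y,z,t) with v_x w_y - v_y w_x nowhere zero, satisfying v_x v_{ty} - v_y v_{tx} + w_x v_{yz} - w_y v_{xz} = 0 and v_x w_{ty} - v_y w_{tx} + w_x w_{yz} - w_y w_{xz} = 0. Then for every λ ≠ 0 the vector fields X = λ∂_x + v_x ∂_t + w_x ∂_z and Y = λ∂_y + v_y ∂_t + w_y ∂_z commute: [X,Y] = 0. -/

import Mathlib

/-!
In coordinates, `[X, Y]^k = Σ_i (X^i ∂_i Y^k - Y^i ∂_i X^k)`. The `x`- and `y`-components of
both fields are constant, so those components of the bracket vanish. In the `z`- and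
`t`-components the `λ`-terms are `λ (f_{xy} - f_{yx})` with `f = w`, resp. `f = v`, and cancel
by the symmetry of second derivatives; what is left is the left-hand side of the second,
resp. first, equation of the system.
-/

/-- Partial derivative on `ℝ⁴` with coordinates `(x,y,z,t) = (0,1,2,3)`. -/
noncomputable def pd (i : Fin 4) (f : (Fin 4 → ℝ) → ℝ) (p : Fin 4 → ℝ) : ℝ :=
  fderiv ℝ f p (Pi.single i 1)

/-- Second partial derivative `f_{ij}`. -/
noncomputable def pdd (i j : Fin 4) (f : (Fin 4 → ℝ) → ℝ) : (Fin 4 → ℝ) → ℝ :=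
  pd i (pd j f)

/-- Commutator of vector fields on `ℝ⁴`. -/
noncomputable def lie4 (V W : (Fin 4 → ℝ) → (Fin 4 → ℝ)) (p : Fin 4 → ℝ) : Fin 4 → ℝ :=
  fderiv ℝ W p (V p) - fderiv ℝ V p (W p)

theorem ContDiff.pd {m n : WithTop ℕ∞} {f : (Fin 4 → ℝ) → ℝ} (hf : ContDiff ℝ n f)
    (hmn : m + 1 ≤ n) (j : Fin 4) : ContDiff ℝ m (pd j f) :=
  (hf.fderiv_right hmn).clm_apply contDiff_const

theorem pd_const (i : Fin 4) (c : ℝ) : pd i (fun _ => c) = 0 := by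
  ext p
  simp [pd]

theorem fderiv_apply_eq_sum_pd (g : (Fin 4 → ℝ) → ℝ) (p u : Fin 4 → ℝ) :
    fderiv ℝ g p u = ∑ i, u i * pd i g p := by
  have hsingle : ∀ i, (Pi.single i 1 : Fin 4 → ℝ) = fun j => if i = j then 1 else 0 := by
    intro i
    ext j
    simp [Pi.single_apply, eq_comm]
  simpa [pd, hsingle] using (fderiv ℝ g p : (Fin 4 → ℝ) →ₗ[ℝ] ℝ).pi_apply_eq_sum_univ u

theorem pdd_comm {f : (Fin 4 → ℝ) → ℝ} (hf : ContDiff ℝ 2 f) (i j : Fin 4) (p : Fin 4 → ℝ) :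
    pdd i j f p = pdd j i f p := by
  have hd : DifferentiableAt ℝ (fderiv ℝ f) p :=
    ((hf.fderiv_right (m := 1) le_rfl).differentiable one_ne_zero).differentiableAt
  have hsecond : ∀ a b,
      pdd a b f p = fderiv ℝ (fderiv ℝ f) p (Pi.single a 1) (Pi.single b 1) := by
    intro a b
    change fderiv ℝ (fun y => fderiv ℝ f y (Pi.single b 1)) p (Pi.single a 1) = _
    simp [fderiv_clm_apply hd (differentiableAt_const _)]
  rw [hsecond, hsecond]
  exact hf.contDiffAt.isSymmSndFDerivAt (by simp) _ _

theorem lie4_apply {V W : (Fin 4 → ℝ) → (Fin 4 → ℝ)} {p : Fin 4 → ℝ}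
    (hV : DifferentiableAt ℝ V p) (hW : DifferentiableAt ℝ W p) (k : Fin 4) :
    lie4 V W p k
      = ∑ i, (V p i * pd i (fun s => W s k) p - W p i * pd i (fun s => V s k) p) := by
  simp only [lie4, Pi.sub_apply, Finset.sum_sub_distrib, ← fderiv_apply_eq_sum_pd,
    fderiv_apply hV, fderiv_apply hW, ContinuousLinearMap.comp_apply,
    ContinuousLinearMap.proj_apply]

theorem differentiableAt_vec4 {a b c d : (Fin 4 → ℝ) → ℝ} {p : Fin 4 → ℝ}
    (ha : DifferentiableAt ℝ a p) (hb : DifferentiableAt ℝ b p) (hc : DifferentiableAt ℝ c p)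
    (hd : DifferentiableAt ℝ d p) : DifferentiableAt ℝ (fun s => ![a s, b s, c s, d s]) p :=
  ha.finCons <| hb.finCons <| hc.finCons <| hd.finCons <| differentiableAt_const _

theorem sum_laxField_mul_pdd_sub (lam a b c d : ℝ) {f : (Fin 4 → ℝ) → ℝ}
    (hf : ContDiff ℝ 2 f) (p : Fin 4 → ℝ) :
    ∑ i, (![lam, 0, a, b] i * pdd i 1 f p - ![0, lam, c, d] i * pdd i 0 f p)
      = b * pdd 3 1 f p - d * pdd 3 0 f p + a * pdd 1 2 f p - c * pdd 0 2 f p := by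
  simp only [Fin.sum_univ_four, Matrix.cons_val_zero, Matrix.cons_val_one, Matrix.cons_val,
    zero_mul]
  rw [pdd_comm hf 0 1, pdd_comm hf 2 1, pdd_comm hf 2 0]
  ring

theorem two_component_first_heavenly_lax_general (v w : (Fin 4 → ℝ) → ℝ) (lam : ℝ)
    (hv : ContDiff ℝ 3 v) (hw : ContDiff ℝ 3 w)
    (heq1 : ∀ p, pd 0 v p * pdd 3 1 v p - pd 1 v p * pdd 3 0 v p
        + pd 0 w p * pdd 1 2 v p - pd 1 w p * pdd 0 2 v p = 0)
    (heq2 : ∀ p, pd 0 v p * pdd 3 1 w p - pd 1 v p * pdd 3 0 w p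
        + pd 0 w p * pdd 1 2 w p - pd 1 w p * pdd 0 2 w p = 0) :
    ∀ p, lie4
        (fun s => ![lam, 0, pd 0 w s, pd 0 v s])
        (fun s => ![0, lam, pd 1 w s, pd 1 v s]) p = 0 := by
  intro p
  have hpd : ∀ {f}, ContDiff ℝ 3 f → ∀ j, Differentiable ℝ (pd j f) := fun hf j =>
    (hf.pd (m := 1) (by norm_num) j).differentiable one_ne_zero
  have hX := differentiableAt_vec4 (differentiableAt_const lam) (differentiableAt_const 0)
    (hpd hw 0 p) (hpd hv 0 p)
  have hY := differentiableAt_vec4 (differentiableAt_const 0) (differentiableAt_const lam)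
    (hpd hw 1 p) (hpd hv 1 p)
  ext k
  rw [lie4_apply hX hY]
  fin_cases k
  · simp [pd_const]
  · simp [pd_const]
  · exact (sum_laxField_mul_pdd_sub lam _ _ _ _ (hw.of_le (by norm_num)) p).trans (heq2 p)
  · exact (sum_laxField_mul_pdd_sub lam _ _ _ _ (hv.of_le (by norm_num)) p).trans (heq1 p)

/-- For `C³` solutions `(v,w)` of the two-component generalization of the first
heavenly equation, with `v_x w_y - v_y w_x` nowhere zero, the Lax fields
`X = λ∂_x + v_x ∂_t + w_x ∂_z` and `Y = λ∂_y + v_y ∂_t + w_y ∂_z` commute for λ ≠ 0. -/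
theorem two_component_first_heavenly_lax (v w : (Fin 4 → ℝ) → ℝ) (lam : ℝ) (hlam : lam ≠ 0)
    (hv : ContDiff ℝ 3 v) (hw : ContDiff ℝ 3 w)
    (hnd : ∀ p, pd 0 v p * pd 1 w p - pd 1 v p * pd 0 w p ≠ 0)
    (heq1 : ∀ p, pd 0 v p * pdd 3 1 v p - pd 1 v p * pdd 3 0 v p
        + pd 0 w p * pdd 1 2 v p - pd 1 w p * pdd 0 2 v p = 0)
    (heq2 : ∀ p, pd 0 v p * pdd 3 1 w p - pd 1 v p * pdd 3 0 w p
        + pd 0 w p * pdd 1 2 w p - pd 1 w p * pdd 0 2 w p = 0) :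
    ∀ p, lie4
        (fun s => ![lam, 0, pd 0 w s, pd 0 v s])
        (fun s => ![0, lam, pd 1 w s, pd 1 v s]) p = 0 :=
  two_component_first_heavenly_lax_general v w lam hv hw heq1 heq2
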